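/- In addition to the hypotheses ensuring positivity (conditions (ii)–(iv) of the interior-cell positivity theorem, with z₂ ≥ 0 and 6Δt·z₂·max{P^{βγ}, 0} ≤ 1 also imposed), assume: all corner concentration values lie in [0,1] (equivalently 0 ≤ r ≤ Φ at every corner); 0 ≤ c̃^{βγ} ≤ 1 for every cell Gauss point, with c̃^{βγ} = c(x_i^β, y_j^γ) whenever q^{βγ} < 0; and the discrete pressure relation holds for every interior cell K_{ij}: ΔxΔy·∑_{β,γ} w_β w_γ (z₁·r(x_i^β,y_j^γ) + z₂·(Φ(x_i^β,y_j^γ) − r(x_i^β,y_j^γ)))·P^{βγ} = Δy·∑_β w_β(u₁⁺_{i−1/2,j,β} − u₁⁺_{i+1/2,j,β}) + Δx·∑_β w_β(u₂⁺_{i,j−1/2,β} − u₂⁺_{i,j+1/2,β}) + ΔxΔy·∑_{β,γ} w_β w_γ q^{βγ}, where Φ(x_i^β,y_j^γ) is the bilinear μ-product combination of the four corner values of Φ. Then the Euler-forward cell-average update satisfies 0 ≤ r̄^{new}_{ij} ≤ Φ̄_{ij} := (1/4)·∑ of Φ over the four corners of K_{ij}, for every interior cell (2 ≤ i ≤ N_x−1,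 2 ≤ j ≤ N_y−1). -/

import Mathlib

/-!
Each of the four parts of the update is, under the CFL and penalty conditions, a combination with
nonnegative weights of nonnegative data. For the convection part the weights are attached to the
corner values of the cell and its neighbours; for the diffusion parts they are attached to the edge
traces, and the penalty `α̃` is what makes the weight of every neighbouring trace nonnegative, while
`r̄/6` pays for the cell's own traces (on either edge these add up to the cell's corner values);
the source part is a sum of one nonnegative term per interior Gauss point. This gives
`0 ≤ r̄ⁿᵉʷ`. The update is affine in `(c, c̃)`, and by the discrete pressure relation the updates
of `c` (with `z₁`) and of the complementary saturation `1 - c` (with `1 - c̃` and `z₂`) add up to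
`Φ̄`; positivity for `1 - c` is the upper bound.
-/

noncomputable section

namespace DG2D

/-- Gauss constant `μ₁ = (3+√3)/6`. -/
def mu1 : ℝ := (3 + Real.sqrt 3) / 6

/-- Gauss constant `μ₂ = (3-√3)/6`. -/
def mu2 : ℝ := (3 - Real.sqrt 3) / 6

/-- Value at the Gauss point `β` of an edge, from the two endpoint (corner) values:
`β = 1` gives `μ₁·a + μ₂·b`, `β = 2` gives `μ₂·a + μ₁·b`. -/
def ga (β : Fin 2) (a b : ℝ) : ℝ := if β = 0 then mu1 * a + mu2 * b else mu2 * a + mu1 * b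

/-- Cell average `r̄_{ij} = (1/4)·∑ cΦ` over the four corners of `K_{ij}`.
`Φ i j` denotes the corner value `Φ_{i+1/2,j+1/2}`; `c00 i j`, `c10 i j`, `c01 i j`,
`c11 i j` denote the corner values of `c` in cell `K_{ij}` at the corners
`(i-1/2,j-1/2)`, `(i+1/2,j-1/2)`, `(i-1/2,j+1/2)`, `(i+1/2,j+1/2)` respectively. -/
def rbar (Φ c00 c10 c01 c11 : ℕ → ℕ → ℝ) (i j : ℕ) : ℝ :=
  (c00 i j * Φ (i - 1) (j - 1) + c10 i j * Φ i (j - 1)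
    + c01 i j * Φ (i - 1) j + c11 i j * Φ i j) / 4

/-- Trace `c⁻` (from `K_{ij}`) at Gauss point `β` of the vertical edge `x_{i+1/2}`, row `j`. -/
def cmV (c10 c11 : ℕ → ℕ → ℝ) (i j : ℕ) (β : Fin 2) : ℝ := ga β (c10 i j) (c11 i j)

/-- Trace `c⁺` (from `K_{i+1,j}`) at Gauss point `β` of the vertical edge `x_{i+1/2}`, row `j`. -/
def cpV (c00 c01 : ℕ → ℕ → ℝ) (i j : ℕ) (β : Fin 2) : ℝ := ga β (c00 (i + 1) j) (c01 (i + 1) j)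

/-- Trace `c⁻` (from `K_{ij}`) at Gauss point `β` of the horizontal edge `y_{j+1/2}`, column `i`. -/
def cmH (c01 c11 : ℕ → ℕ → ℝ) (i j : ℕ) (β : Fin 2) : ℝ := ga β (c01 i j) (c11 i j)

/-- Trace `c⁺` (from `K_{i,j+1}`) at Gauss point `β` of the horizontal edge `y_{j+1/2}`. -/
def cpH (c00 c10 : ℕ → ℕ → ℝ) (i j : ℕ) (β : Fin 2) : ℝ := ga β (c00 i (j + 1)) (c10 i (j + 1))

/-- Jump `[c] = c⁺ - c⁻` at a vertical-edge Gauss point. -/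
def jumpV (c00 c10 c01 c11 : ℕ → ℕ → ℝ) (i j : ℕ) (β : Fin 2) : ℝ :=
  cpV c00 c01 i j β - cmV c10 c11 i j β

/-- Jump `[c] = c⁺ - c⁻` at a horizontal-edge Gauss point. -/
def jumpH (c00 c10 c01 c11 : ℕ → ℕ → ℝ) (i j : ℕ) (β : Fin 2) : ℝ :=
  cpH c00 c10 i j β - cmH c01 c11 i j β

/-- Convective flux `û₁c = u₁⁺·c⁺ - α·[c]` at vertical-edge Gauss points. -/
def uc1 (u1 : ℕ → ℕ → Fin 2 → ℝ) (c00 c10 c01 c11 : ℕ → ℕ → ℝ) (α : ℝ)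
    (i j : ℕ) (β : Fin 2) : ℝ :=
  u1 i j β * cpV c00 c01 i j β - α * (cpV c00 c01 i j β - cmV c10 c11 i j β)

/-- Convective flux `û₂c = u₂⁺·c⁺ - α·[c]` at horizontal-edge Gauss points. -/
def uc2 (u2 : ℕ → ℕ → Fin 2 → ℝ) (c00 c10 c01 c11 : ℕ → ℕ → ℝ) (α : ℝ)
    (i j : ℕ) (β : Fin 2) : ℝ :=
  u2 i j β * cpH c00 c10 i j β - α * (cpH c00 c10 i j β - cmH c01 c11 i j β)

/-- Convection part `H^c_{ij}`. -/
def Hc (u1 u2 : ℕ → ℕ → Fin 2 → ℝ) (Φ c00 c10 c01 c11 : ℕ → ℕ → ℝ) (α Δx Δy Δt : ℝ)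
    (i j : ℕ) : ℝ :=
  rbar Φ c00 c10 c01 c11 i j / 3
    + (Δt / Δx) * ∑ β : Fin 2, (1 / 2 : ℝ) *
        (uc1 u1 c00 c10 c01 c11 α (i - 1) j β - uc1 u1 c00 c10 c01 c11 α i j β)
    + (Δt / Δy) * ∑ β : Fin 2, (1 / 2 : ℝ) *
        (uc2 u2 c00 c10 c01 c11 α i (j - 1) β - uc2 u2 c00 c10 c01 c11 α i j β)

/-- Derivative trace `(c_x)⁻` at a vertical-edge Gauss point:
`(c_x)⁻_{i+1/2,β} = (c⁻_{i+1/2,β} - c⁺_{i-1/2,β})/Δx`. -/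
def cxmV (c00 c10 c01 c11 : ℕ → ℕ → ℝ) (Δx : ℝ) (i j : ℕ) (β : Fin 2) : ℝ :=
  (cmV c10 c11 i j β - cpV c00 c01 (i - 1) j β) / Δx

/-- Derivative trace `(c_x)⁺` at a vertical-edge Gauss point:
`(c_x)⁺_{i+1/2,β} = (c⁻_{i+3/2,β} - c⁺_{i+1/2,β})/Δx`. -/
def cxpV (c00 c10 c01 c11 : ℕ → ℕ → ℝ) (Δx : ℝ) (i j : ℕ) (β : Fin 2) : ℝ :=
  (cmV c10 c11 (i + 1) j β - cpV c00 c01 i j β) / Δx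

/-- Tangential derivative trace `(c_y)⁻` on a vertical edge:
`(√3/Δy)·(c⁻_{i+1/2,2} - c⁻_{i+1/2,1})` (the same for both Gauss points). -/
def cymV (c10 c11 : ℕ → ℕ → ℝ) (Δy : ℝ) (i j : ℕ) : ℝ :=
  (Real.sqrt 3 / Δy) * (cmV c10 c11 i j 1 - cmV c10 c11 i j 0)

/-- Tangential derivative trace `(c_y)⁺` on a vertical edge. -/
def cypV (c00 c01 : ℕ → ℕ → ℝ) (Δy : ℝ) (i j : ℕ) : ℝ :=
  (Real.sqrt 3 / Δy) * (cpV c00 c01 i j 1 - cpV c00 c01 i j 0)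

/-- Average `{D₁₁c_x + D₁₂c_y}` at a vertical-edge Gauss point. -/
def GxV (D11m D11p D12m D12p : ℕ → ℕ → Fin 2 → ℝ) (c00 c10 c01 c11 : ℕ → ℕ → ℝ)
    (Δx Δy : ℝ) (i j : ℕ) (β : Fin 2) : ℝ :=
  (D11m i j β * cxmV c00 c10 c01 c11 Δx i j β + D12m i j β * cymV c10 c11 Δy i j
    + D11p i j β * cxpV c00 c10 c01 c11 Δx i j β + D12p i j β * cypV c00 c01 Δy i j) / 2

/-- x-diffusion part `H^d_x`. -/
def Hdx (D11m D11p D12m D12p : ℕ → ℕ → Fin 2 → ℝ) (Φ c00 c10 c01 c11 : ℕ → ℕ → ℝ)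
    (αt Δx Δy Δt : ℝ) (i j : ℕ) : ℝ :=
  rbar Φ c00 c10 c01 c11 i j / 6
    - (Δt / Δx) * ∑ β : Fin 2, (1 / 2 : ℝ) *
        ((GxV D11m D11p D12m D12p c00 c10 c01 c11 Δx Δy (i - 1) j β
            + (αt / Δy) * jumpV c00 c10 c01 c11 (i - 1) j β)
          - (GxV D11m D11p D12m D12p c00 c10 c01 c11 Δx Δy i j β
            + (αt / Δy) * jumpV c00 c10 c01 c11 i j β))

/-- Derivative trace `(c_y)⁻` at a horizontal-edge Gauss point. -/
def cymH (c00 c10 c01 c11 : ℕ → ℕ → ℝ) (Δy : ℝ) (i j : ℕ) (β : Fin 2) : ℝ :=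
  (cmH c01 c11 i j β - cpH c00 c10 i (j - 1) β) / Δy

/-- Derivative trace `(c_y)⁺` at a horizontal-edge Gauss point. -/
def cypH (c00 c10 c01 c11 : ℕ → ℕ → ℝ) (Δy : ℝ) (i j : ℕ) (β : Fin 2) : ℝ :=
  (cmH c01 c11 i (j + 1) β - cpH c00 c10 i j β) / Δy

/-- Tangential derivative trace `(c_x)⁻` on a horizontal edge. -/
def cxmH (c01 c11 : ℕ → ℕ → ℝ) (Δx : ℝ) (i j : ℕ) : ℝ :=
  (Real.sqrt 3 / Δx) * (cmH c01 c11 i j 1 - cmH c01 c11 i j 0)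

/-- Tangential derivative trace `(c_x)⁺` on a horizontal edge. -/
def cxpH (c00 c10 : ℕ → ℕ → ℝ) (Δx : ℝ) (i j : ℕ) : ℝ :=
  (Real.sqrt 3 / Δx) * (cpH c00 c10 i j 1 - cpH c00 c10 i j 0)

/-- Average `{D₂₁c_x + D₂₂c_y}` at a horizontal-edge Gauss point. -/
def GyH (D21m D21p D22m D22p : ℕ → ℕ → Fin 2 → ℝ) (c00 c10 c01 c11 : ℕ → ℕ → ℝ)
    (Δx Δy : ℝ) (i j : ℕ) (β : Fin 2) : ℝ :=
  (D21m i j β * cxmH c01 c11 Δx i j + D22m i j β * cymH c00 c10 c01 c11 Δy i j β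
    + D21p i j β * cxpH c00 c10 Δx i j + D22p i j β * cypH c00 c10 c01 c11 Δy i j β) / 2

/-- y-diffusion part `H^d_y`. -/
def Hdy (D21m D21p D22m D22p : ℕ → ℕ → Fin 2 → ℝ) (Φ c00 c10 c01 c11 : ℕ → ℕ → ℝ)
    (αt Δx Δy Δt : ℝ) (i j : ℕ) : ℝ :=
  rbar Φ c00 c10 c01 c11 i j / 6
    - (Δt / Δy) * ∑ β : Fin 2, (1 / 2 : ℝ) *
        ((GyH D21m D21p D22m D22p c00 c10 c01 c11 Δx Δy i (j - 1) β
            + (αt / Δx) * jumpH c00 c10 c01 c11 i (j - 1) β)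
          - (GyH D21m D21p D22m D22p c00 c10 c01 c11 Δx Δy i j β
            + (αt / Δx) * jumpH c00 c10 c01 c11 i j β))

/-- Value of the bilinear function `c` at the interior Gauss point `(β,γ)` of cell `K_{ij}`. -/
def cGP (c00 c10 c01 c11 : ℕ → ℕ → ℝ) (i j : ℕ) (β γ : Fin 2) : ℝ :=
  ga β (ga γ (c00 i j) (c01 i j)) (ga γ (c10 i j) (c11 i j))

/-- Value of the bilinear function `r = cΦ` at the interior Gauss point `(β,γ)` of `K_{ij}`. -/
def rGP (Φ c00 c10 c01 c11 : ℕ → ℕ → ℝ) (i j : ℕ) (β γ : Fin 2) : ℝ :=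
  ga β (ga γ (c00 i j * Φ (i - 1) (j - 1)) (c01 i j * Φ (i - 1) j))
    (ga γ (c10 i j * Φ i (j - 1)) (c11 i j * Φ i j))

/-- Value of the bilinear interpolant of `Φ` at the interior Gauss point `(β,γ)` of `K_{ij}`. -/
def phiGP (Φ : ℕ → ℕ → ℝ) (i j : ℕ) (β γ : Fin 2) : ℝ :=
  ga β (ga γ (Φ (i - 1) (j - 1)) (Φ (i - 1) j)) (ga γ (Φ i (j - 1)) (Φ i j))

/-- Source part `H^s_{ij}`. -/
def Hs (Φ c00 c10 c01 c11 : ℕ → ℕ → ℝ) (q ct P : ℕ → ℕ → Fin 2 → Fin 2 → ℝ)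
    (z1 Δt : ℝ) (i j : ℕ) : ℝ :=
  rbar Φ c00 c10 c01 c11 i j / 3
    + Δt * ∑ β : Fin 2, ∑ γ : Fin 2, (1 / 2 : ℝ) * (1 / 2 : ℝ) *
        (ct i j β γ * q i j β γ - z1 * rGP Φ c00 c10 c01 c11 i j β γ * P i j β γ)

/-- The Euler-forward cell-average update `r̄^{new}_{ij} = H^c + H^d_x + H^d_y + H^s`. -/
def rbarnew (u1 u2 D11m D11p D12m D12p D21m D21p D22m D22p : ℕ → ℕ → Fin 2 → ℝ)
    (Φ c00 c10 c01 c11 : ℕ → ℕ → ℝ) (q ct P : ℕ → ℕ → Fin 2 → Fin 2 → ℝ)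
    (α αt z1 Δx Δy Δt : ℝ) (i j : ℕ) : ℝ :=
  Hc u1 u2 Φ c00 c10 c01 c11 α Δx Δy Δt i j
    + Hdx D11m D11p D12m D12p Φ c00 c10 c01 c11 αt Δx Δy Δt i j
    + Hdy D21m D21p D22m D22p Φ c00 c10 c01 c11 αt Δx Δy Δt i j
    + Hs Φ c00 c10 c01 c11 q ct P z1 Δt i j

lemma sqrt_three_le_two : Real.sqrt 3 ≤ 2 := by
  rw [Real.sqrt_le_left (by norm_num)]; norm_num

lemma mu1_nonneg : 0 ≤ mu1 := by unfold mu1; positivity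

lemma mu2_nonneg : 0 ≤ mu2 := by unfold mu2; linarith [sqrt_three_le_two]

lemma mu1_add_mu2 : mu1 + mu2 = 1 := by unfold mu1 mu2; ring

lemma ga_zero (a b : ℝ) : ga 0 a b = mu1 * a + mu2 * b := rfl

lemma ga_one (a b : ℝ) : ga 1 a b = mu2 * a + mu1 * b := rfl

lemma ga_self (β : Fin 2) (a : ℝ) : ga β a a = a := by
  fin_cases β
  · simp only [Fin.zero_eta, ga_zero]; linear_combination a * mu1_add_mu2
  · simp only [Fin.mk_one, ga_one]; linear_combination a * mu1_add_mu2

lemma ga_one_sub (β : Fin 2) (a b : ℝ) : ga β (1 - a) (1 - b) = 1 - ga β a b := by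
  fin_cases β
  · simp only [Fin.zero_eta, ga_zero]; linear_combination mu1_add_mu2
  · simp only [Fin.mk_one, ga_one]; linear_combination mu1_add_mu2

lemma mul_ga (β : Fin 2) (m a b : ℝ) : m * ga β a b = ga β (m * a) (m * b) := by
  fin_cases β
  · simp only [Fin.zero_eta, ga_zero]; ring
  · simp only [Fin.mk_one, ga_one]; ring

@[gcongr]
lemma ga_mono (β : Fin 2) {a a' b b' : ℝ} (ha : a ≤ a') (hb : b ≤ b') :
    ga β a b ≤ ga β a' b' := by
  have := mu1_nonneg; have := mu2_nonneg
  fin_cases β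
  · simp only [Fin.zero_eta, ga_zero]; gcongr
  · simp only [Fin.mk_one, ga_one]; gcongr

lemma ga_nonneg (β : Fin 2) {a b : ℝ} (ha : 0 ≤ a) (hb : 0 ≤ b) : 0 ≤ ga β a b :=
  ga_self β 0 ▸ ga_mono β ha hb

lemma ga_le (β : Fin 2) {a b M : ℝ} (ha : a ≤ M) (hb : b ≤ M) : ga β a b ≤ M :=
  ga_self β M ▸ ga_mono β ha hb

lemma sum_ga (a b : ℝ) : ∑ β : Fin 2, ga β a b = a + b := by
  rw [Fin.sum_univ_two, ga_zero, ga_one]; linear_combination (a + b) * mu1_add_mu2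

lemma sum_mul_ga (g : Fin 2 → ℝ) (a b : ℝ) :
    ∑ β, g β * ga β a b = a * ga 0 (g 0) (g 1) + b * ga 1 (g 0) (g 1) := by
  simp only [Fin.sum_univ_two, ga_zero, ga_one]; ring

def CellNonneg (c00 c10 c01 c11 : ℕ → ℕ → ℝ) (i j : ℕ) : Prop :=
  0 ≤ c00 i j ∧ 0 ≤ c10 i j ∧ 0 ≤ c01 i j ∧ 0 ≤ c11 i j

section CellNonneg

variable {Φ c00 c10 c01 c11 : ℕ → ℕ → ℝ} {i j : ℕ}

lemma cellNonneg_and_one_sub {a b : ℕ}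
    (h : (0 ≤ c00 a b ∧ c00 a b ≤ 1) ∧ (0 ≤ c10 a b ∧ c10 a b ≤ 1) ∧
      (0 ≤ c01 a b ∧ c01 a b ≤ 1) ∧ (0 ≤ c11 a b ∧ c11 a b ≤ 1)) :
    CellNonneg c00 c10 c01 c11 a b ∧ CellNonneg (1 - c00) (1 - c10) (1 - c01) (1 - c11) a b := by
  obtain ⟨⟨p00, q00⟩, ⟨p10, q10⟩, ⟨p01, q01⟩, ⟨p11, q11⟩⟩ := h
  exact ⟨⟨p00, p10, p01, p11⟩, sub_nonneg.mpr q00, sub_nonneg.mpr q10, sub_nonneg.mpr q01,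
    sub_nonneg.mpr q11⟩

lemma CellNonneg.swap (h : CellNonneg c00 c10 c01 c11 i j) :
    CellNonneg (Function.swap c00) (Function.swap c01) (Function.swap c10) (Function.swap c11)
      j i :=
  ⟨h.1, h.2.2.1, h.2.1, h.2.2.2⟩

lemma cmV_nonneg (h : CellNonneg c00 c10 c01 c11 i j) (β : Fin 2) : 0 ≤ cmV c10 c11 i j β :=
  ga_nonneg β h.2.1 h.2.2.2

lemma cpV_nonneg (h : CellNonneg c00 c10 c01 c11 (i + 1) j) (β : Fin 2) :
    0 ≤ cpV c00 c01 i j β :=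
  ga_nonneg β h.1 h.2.2.1

lemma cmH_nonneg (h : CellNonneg c00 c10 c01 c11 i j) (β : Fin 2) : 0 ≤ cmH c01 c11 i j β :=
  ga_nonneg β h.2.2.1 h.2.2.2

lemma cpH_nonneg (h : CellNonneg c00 c10 c01 c11 i (j + 1)) (β : Fin 2) :
    0 ≤ cpH c00 c10 i j β :=
  ga_nonneg β h.1 h.2.1

lemma cGP_nonneg (h : CellNonneg c00 c10 c01 c11 i j) (β γ : Fin 2) :
    0 ≤ cGP c00 c10 c01 c11 i j β γ :=
  ga_nonneg β (ga_nonneg γ h.1 h.2.2.1) (ga_nonneg γ h.2.1 h.2.2.2)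

lemma mul_cGP_le_rGP {m : ℝ} (h : CellNonneg c00 c10 c01 c11 i j)
    (h00 : m ≤ Φ (i - 1) (j - 1)) (h10 : m ≤ Φ i (j - 1)) (h01 : m ≤ Φ (i - 1) j)
    (h11 : m ≤ Φ i j) (β γ : Fin 2) :
    m * cGP c00 c10 c01 c11 i j β γ ≤ rGP Φ c00 c10 c01 c11 i j β γ := by
  obtain ⟨p00, p10, p01, p11⟩ := h
  simp only [cGP, rGP, mul_ga]
  gcongr ga β (ga γ ?_ ?_) (ga γ ?_ ?_) <;> rw [mul_comm] <;> gcongr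

lemma mul_sum_le_rbar {m : ℝ} (h : CellNonneg c00 c10 c01 c11 i j)
    (h00 : m ≤ Φ (i - 1) (j - 1)) (h10 : m ≤ Φ i (j - 1)) (h01 : m ≤ Φ (i - 1) j)
    (h11 : m ≤ Φ i j) :
    m * (c00 i j + c10 i j + c01 i j + c11 i j) / 4 ≤ rbar Φ c00 c10 c01 c11 i j := by
  obtain ⟨p00, p10, p01, p11⟩ := h
  unfold rbar
  gcongr ?_ / 4
  linear_combination c00 i j * h00 + c10 i j * h10 + c01 i j * h01 + c11 i j * h11

end CellNonneg

lemma le_sum_upwind_flux_sub {ui uo mi po : Fin 2 → ℝ} {α a b c d : ℝ} (hα : 0 ≤ α)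
    (huo : ∀ β, uo β ≤ α) (hmi : ∀ β, 0 ≤ mi β) (hpo : ∀ β, 0 ≤ po β) :
    -(1 / 2) * (a * ga 0 (α - ui 0) (α - ui 1) + b * ga 1 (α - ui 0) (α - ui 1) + α * (c + d))
      ≤ ∑ β, 1 / 2 * ((ui β * ga β a b - α * (ga β a b - mi β))
          - (uo β * po β - α * (po β - ga β c d))) := by
  have h β : -((α - ui β) * ga β a b) - α * ga β c d
      ≤ (ui β * ga β a b - α * (ga β a b - mi β)) - (uo β * po β - α * (po β - ga β c d)) := by
    nlinarith [mul_nonneg hα (hmi β), mul_nonneg (sub_nonneg.mpr (huo β)) (hpo β)]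
  calc -(1 / 2) * (a * ga 0 (α - ui 0) (α - ui 1) + b * ga 1 (α - ui 0) (α - ui 1) + α * (c + d))
      = ∑ β, 1 / 2 * (-((α - ui β) * ga β a b) - α * ga β c d) := by
        rw [← Finset.mul_sum, Finset.sum_sub_distrib, Finset.sum_neg_distrib, ← Finset.mul_sum,
          sum_mul_ga (fun β => α - ui β), sum_ga]
        ring
    _ ≤ _ := Finset.sum_le_sum fun β _ => mul_le_mul_of_nonneg_left (h β) (by norm_num)

lemma add_mul_le_of_add_mul_le {l₁ l₂ X Y B : ℝ} (hl₁ : 0 ≤ l₁) (hl₂ : 0 ≤ l₂)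
    (hX : (l₁ + l₂) * X ≤ B) (hY : (l₁ + l₂) * Y ≤ B) : l₁ * X + l₂ * Y ≤ B := by
  rcases le_total X Y with h | h <;>
    nlinarith [mul_le_mul_of_nonneg_left h hl₁, mul_le_mul_of_nonneg_left h hl₂]

theorem Hc_nonneg {u1 u2 : ℕ → ℕ → Fin 2 → ℝ} {Φ c00 c10 c01 c11 : ℕ → ℕ → ℝ}
    {α Δx Δy Δt : ℝ} {i j : ℕ} (hi : 1 ≤ i) (hj : 1 ≤ j)
    (hΔx : 0 < Δx) (hΔy : 0 < Δy) (hΔt : 0 ≤ Δt) (hα : 0 ≤ α)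
    (hc : CellNonneg c00 c10 c01 c11 i j) (hcL : CellNonneg c00 c10 c01 c11 (i - 1) j)
    (hcR : CellNonneg c00 c10 c01 c11 (i + 1) j) (hcB : CellNonneg c00 c10 c01 c11 i (j - 1))
    (hcT : CellNonneg c00 c10 c01 c11 i (j + 1))
    (huR : ∀ β, u1 i j β ≤ α) (huT : ∀ β, u2 i j β ≤ α)
    (hL : ∀ β, (Δt / Δx + Δt / Δy) * (α - u1 (i - 1) j β) ≤ Φ (i - 1) (j - 1) / 6 ∧
      (Δt / Δx + Δt / Δy) * (α - u1 (i - 1) j β) ≤ Φ (i - 1) j / 6)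
    (hB : ∀ β, (Δt / Δx + Δt / Δy) * (α - u2 i (j - 1) β) ≤ Φ (i - 1) (j - 1) / 6 ∧
      (Δt / Δx + Δt / Δy) * (α - u2 i (j - 1) β) ≤ Φ i (j - 1) / 6)
    (hA : ∀ a b, i - 1 ≤ a → a ≤ i → j - 1 ≤ b → b ≤ j →
      (Δt / Δx + Δt / Δy) * α ≤ Φ a b / 6) :
    0 ≤ Hc u1 u2 Φ c00 c10 c01 c11 α Δx Δy Δt i j := by
  have e1 : i - 1 + 1 = i := by omega
  have e2 : j - 1 + 1 = j := by omega
  have hl₁ : 0 ≤ Δt / Δx := by positivity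
  have hl₂ : 0 ≤ Δt / Δy := by positivity
  have hx := le_sum_upwind_flux_sub (a := c00 i j) (b := c01 i j) (c := c10 i j) (d := c11 i j)
    (ui := u1 (i - 1) j) hα huR (cmV_nonneg hcL) (cpV_nonneg hcR)
  have hy := le_sum_upwind_flux_sub (a := c00 i j) (b := c10 i j) (c := c01 i j) (d := c11 i j)
    (ui := u2 i (j - 1)) hα huT (cmH_nonneg hcB) (cpH_nonneg hcT)
  -- The share `c Φ / 12` of each corner in `r̄/3` pays for its outflow through the two edges
  -- meeting there.
  have k00 : Δt / Δx * ga 0 (α - u1 (i - 1) j 0) (α - u1 (i - 1) j 1)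
      + Δt / Δy * ga 0 (α - u2 i (j - 1) 0) (α - u2 i (j - 1) 1) ≤ Φ (i - 1) (j - 1) / 6 :=
    add_mul_le_of_add_mul_le hl₁ hl₂ (by rw [mul_ga]; exact ga_le 0 (hL 0).1 (hL 1).1)
      (by rw [mul_ga]; exact ga_le 0 (hB 0).1 (hB 1).1)
  have k01 : Δt / Δx * ga 1 (α - u1 (i - 1) j 0) (α - u1 (i - 1) j 1) + Δt / Δy * α
      ≤ Φ (i - 1) j / 6 :=
    add_mul_le_of_add_mul_le hl₁ hl₂ (by rw [mul_ga]; exact ga_le 1 (hL 0).2 (hL 1).2)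
      (hA _ _ le_rfl (by omega) (by omega) le_rfl)
  have k10 : Δt / Δx * α + Δt / Δy * ga 1 (α - u2 i (j - 1) 0) (α - u2 i (j - 1) 1)
      ≤ Φ i (j - 1) / 6 :=
    add_mul_le_of_add_mul_le hl₁ hl₂ (hA _ _ (by omega) le_rfl le_rfl (by omega))
      (by rw [mul_ga]; exact ga_le 1 (hB 0).2 (hB 1).2)
  have k11 : Δt / Δx * α + Δt / Δy * α ≤ Φ i j / 6 :=
    add_mul_le_of_add_mul_le hl₁ hl₂ (hA _ _ (by omega) le_rfl (by omega) le_rfl)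
      (hA _ _ (by omega) le_rfl (by omega) le_rfl)
  obtain ⟨p00, p10, p01, p11⟩ := hc
  simp only [Hc, rbar, uc1, uc2, cpV, cmV, cpH, cmH, e1, e2] at hx hy ⊢
  linear_combination Δt / Δx * hx + Δt / Δy * hy + c00 i j / 2 * k00 + c01 i j / 2 * k01
    + c10 i j / 2 * k10 + c11 i j / 2 * k11

lemma mul_sub_le_of_abs_le {d E x y : ℝ} (hd : |d| ≤ E) (hx : 0 ≤ x) (hy : 0 ≤ y) :
    d * (y - x) ≤ E * (x + y) := by
  obtain ⟨h1, h2⟩ := abs_le.mp hd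
  nlinarith

/-- The interior-penalty flux `{D₁₁c_x + D₁₂c_y} + (α̃/Δy)[c]` at Gauss point `β` of a vertical
edge, in terms of the traces `cL = c⁻`, `cR = c⁺` on the edge and `cLL = c⁺`, `cRR = c⁻` on the
edges to its left and right. -/
def diffusiveFlux (D11m D11p D12m D12p : Fin 2 → ℝ) (αt Δx Δy : ℝ) (cLL cL cR cRR : Fin 2 → ℝ)
    (β : Fin 2) : ℝ :=
  (D11m β * ((cL β - cLL β) / Δx) + D12m β * (Real.sqrt 3 / Δy * (cL 1 - cL 0))
    + D11p β * ((cRR β - cR β) / Δx) + D12p β * (Real.sqrt 3 / Δy * (cR 1 - cR 0))) / 2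
    + αt / Δy * (cR β - cL β)

lemma diffusiveFlux_reflect (D11m D11p D12m D12p : Fin 2 → ℝ) (αt Δx Δy : ℝ)
    (cLL cL cR cRR : Fin 2 → ℝ) (β : Fin 2) :
    diffusiveFlux D11m D11p D12m D12p αt Δx Δy cLL cL cR cRR β
      = -diffusiveFlux D11p D11m (-D12p) (-D12m) αt Δx Δy cRR cR cL cLL β := by
  simp only [diffusiveFlux, Pi.neg_apply]; ring

lemma GxV_add_jumpV (D11m D11p D12m D12p : ℕ → ℕ → Fin 2 → ℝ) (c00 c10 c01 c11 : ℕ → ℕ → ℝ)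
    (αt Δx Δy : ℝ) (i j : ℕ) (β : Fin 2) :
    GxV D11m D11p D12m D12p c00 c10 c01 c11 Δx Δy i j β + αt / Δy * jumpV c00 c10 c01 c11 i j β
      = diffusiveFlux (D11m i j) (D11p i j) (D12m i j) (D12p i j) αt Δx Δy
          (cpV c00 c01 (i - 1) j) (cmV c10 c11 i j) (cpV c00 c01 i j) (cmV c10 c11 (i + 1) j) β :=
  rfl

section diffusiveFlux

variable {D11m D11p D12m D12p cLL cL cR cRR : Fin 2 → ℝ} {αt Δx Δy D E : ℝ}
  (hΔx : 0 < Δx) (hΔy : 0 < Δy)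
  (hD11m : ∀ β, 0 ≤ D11m β ∧ D11m β ≤ D) (hD11p : ∀ β, 0 ≤ D11p β ∧ D11p β ≤ D)
  (hD12m : ∀ β, |D12m β| ≤ E) (hD12p : ∀ β, |D12p β| ≤ E)
  (hαt : Δy / (2 * Δx) * D + Real.sqrt 3 * E ≤ αt)
  (hLL : ∀ β, 0 ≤ cLL β) (hL : ∀ β, 0 ≤ cL β) (hR : ∀ β, 0 ≤ cR β) (hRR : ∀ β, 0 ≤ cRR β)
include hΔx hΔy hD11m hD11p hD12m hD12p hαt hLL hL hR hRR

lemma sum_diffusiveFlux_le :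
    ∑ β, 1 / 2 * diffusiveFlux D11m D11p D12m D12p αt Δx Δy cLL cL cR cRR β
      ≤ (αt + Real.sqrt 3 * E) / (2 * Δy) * (∑ β, cR β) + D / (4 * Δx) * ∑ β, cRR β := by
  -- The penalty makes the total coefficient of `cL` nonpositive.
  have hpen : (D / (4 * Δx) + Real.sqrt 3 * E / (2 * Δy)) * (cL 0 + cL 1)
      ≤ αt / (2 * Δy) * (cL 0 + cL 1) := by
    gcongr
    · exact add_nonneg (hL 0) (hL 1)
    · calc D / (4 * Δx) + Real.sqrt 3 * E / (2 * Δy)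
          = (Δy / (2 * Δx) * D + Real.sqrt 3 * E) / (2 * Δy) := by field_simp; ring
        _ ≤ αt / (2 * Δy) := by gcongr
  have key β : D11m β * cL β ≤ D * cL β ∧ 0 ≤ D11m β * cLL β ∧ 0 ≤ D11p β * cR β ∧
      D11p β * cRR β ≤ D * cRR β ∧ D12m β * (cL 1 - cL 0) ≤ E * (cL 0 + cL 1) ∧
      D12p β * (cR 1 - cR 0) ≤ E * (cR 0 + cR 1) :=
    ⟨mul_le_mul_of_nonneg_right (hD11m β).2 (hL β), mul_nonneg (hD11m β).1 (hLL β),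
      mul_nonneg (hD11p β).1 (hR β), mul_le_mul_of_nonneg_right (hD11p β).2 (hRR β),
      mul_sub_le_of_abs_le (hD12m β) (hL 0) (hL 1), mul_sub_le_of_abs_le (hD12p β) (hR 0) (hR 1)⟩
  obtain ⟨a0, b0, c0, d0, e0, f0⟩ := key 0
  obtain ⟨a1, b1, c1, d1, e1, f1⟩ := key 1
  simp only [diffusiveFlux, Fin.sum_univ_two]
  linear_combination Δx⁻¹ / 4 * (a0 + a1 + b0 + b1 + c0 + c1 + d0 + d1)
    + Real.sqrt 3 / Δy / 4 * (e0 + e1 + f0 + f1) + hpen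

lemma neg_sum_diffusiveFlux_le :
    -∑ β, 1 / 2 * diffusiveFlux D11m D11p D12m D12p αt Δx Δy cLL cL cR cRR β
      ≤ (αt + Real.sqrt 3 * E) / (2 * Δy) * (∑ β, cL β) + D / (4 * Δx) * ∑ β, cLL β := by
  have h := sum_diffusiveFlux_le (D12m := -D12p) (D12p := -D12m) hΔx hΔy hD11p hD11m
    (by simpa using hD12p) (by simpa using hD12m) hαt hRR hR hL hLL
  simpa [diffusiveFlux_reflect D11m, Finset.sum_neg_distrib] using h

end diffusiveFlux

lemma diffusion_cfl_weight_le {D E αt Δx Δy Δt Φ : ℝ} (hΔx : 0 < Δx) (hΔy : 0 < Δy)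
    (hΔt : 0 ≤ Δt) (hD : 0 ≤ D) (hE : 0 ≤ E) (hαt : 0 ≤ αt)
    (h : D * (Δt / Δx ^ 2) + 2 * (αt + E) * (Δt / (Δx * Δy)) < Φ / 12) :
    24 * (Δt / Δx * ((αt + Real.sqrt 3 * E) / (2 * Δy) + D / (4 * Δx))) ≤ Φ := by
  have hl : 0 ≤ Δt / (Δx * Δy) := by positivity
  have hL : 0 ≤ Δt / Δx ^ 2 := by positivity
  have e : 24 * (Δt / Δx * ((αt + Real.sqrt 3 * E) / (2 * Δy) + D / (4 * Δx)))
      = 12 * (αt + Real.sqrt 3 * E) * (Δt / (Δx * Δy)) + 6 * D * (Δt / Δx ^ 2) := by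
    field_simp; ring
  rw [e]
  nlinarith [mul_le_mul_of_nonneg_right sqrt_three_le_two (mul_nonneg hE hl),
    mul_nonneg hαt hl, mul_nonneg hD hL]

theorem Hdx_nonneg {D11m D11p D12m D12p : ℕ → ℕ → Fin 2 → ℝ} {Φ c00 c10 c01 c11 : ℕ → ℕ → ℝ}
    {αt Δx Δy Δt D E : ℝ} {i j : ℕ} (hi : 2 ≤ i)
    (hΔx : 0 < Δx) (hΔy : 0 < Δy) (hΔt : 0 ≤ Δt)
    (hD11 : ∀ e, i - 1 ≤ e → e ≤ i → ∀ β,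
      (0 ≤ D11m e j β ∧ D11m e j β ≤ D) ∧ (0 ≤ D11p e j β ∧ D11p e j β ≤ D))
    (hD12 : ∀ e, i - 1 ≤ e → e ≤ i → ∀ β, |D12m e j β| ≤ E ∧ |D12p e j β| ≤ E)
    (hαt : Δy / (2 * Δx) * D + Real.sqrt 3 * E ≤ αt)
    (hCFL : ∀ a b, i - 1 ≤ a → a ≤ i → j - 1 ≤ b → b ≤ j →
      D * (Δt / Δx ^ 2) + 2 * (αt + E) * (Δt / (Δx * Δy)) < Φ a b / 12)
    (hc : ∀ a, i - 1 ≤ a → a ≤ i + 1 → CellNonneg c00 c10 c01 c11 a j) :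
    0 ≤ Hdx D11m D11p D12m D12p Φ c00 c10 c01 c11 αt Δx Δy Δt i j := by
  have e1 : i - 1 + 1 = i := by omega
  have e2 : i - 1 - 1 + 1 = i - 1 := by omega
  have hD : 0 ≤ D := (hD11 i (by omega) le_rfl 0).1.1.trans (hD11 i (by omega) le_rfl 0).1.2
  have hE : 0 ≤ E := (abs_nonneg _).trans (hD12 i (by omega) le_rfl 0).1
  have hαt0 : 0 ≤ αt := le_trans (by positivity) hαt
  have hcL := hc (i - 1) le_rfl (by omega)
  have hcC := hc i (by omega) (by omega)
  have hcR := hc (i + 1) (by omega) le_rfl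
  have hleft := sum_diffusiveFlux_le hΔx hΔy
    (fun β => (hD11 (i - 1) le_rfl (by omega) β).1) (fun β => (hD11 (i - 1) le_rfl (by omega) β).2)
    (fun β => (hD12 (i - 1) le_rfl (by omega) β).1) (fun β => (hD12 (i - 1) le_rfl (by omega) β).2)
    hαt (cpV_nonneg (e2 ▸ hcL)) (cmV_nonneg hcL) (cpV_nonneg (e1 ▸ hcC)) (cmV_nonneg (e1 ▸ hcC))
  have hright := neg_sum_diffusiveFlux_le hΔx hΔy
    (fun β => (hD11 i (by omega) le_rfl β).1) (fun β => (hD11 i (by omega) le_rfl β).2)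
    (fun β => (hD12 i (by omega) le_rfl β).1) (fun β => (hD12 i (by omega) le_rfl β).2)
    hαt (cpV_nonneg (e1 ▸ hcC)) (cmV_nonneg hcC) (cpV_nonneg hcR) (cmV_nonneg hcR)
  -- On either edge, the cell's own traces add up to its corner values.
  simp only [cpV, cmV, e1, sum_ga] at hleft hright
  have hm a b (h₁ : i - 1 ≤ a) (h₂ : a ≤ i) (h₃ : j - 1 ≤ b) (h₄ : b ≤ j) :=
    diffusion_cfl_weight_le hΔx hΔy hΔt hD hE hαt0 (hCFL a b h₁ h₂ h₃ h₄)
  have hrbar := mul_sum_le_rbar hcC (hm _ _ le_rfl (by omega) le_rfl (by omega))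
    (hm _ _ (by omega) le_rfl le_rfl (by omega)) (hm _ _ le_rfl (by omega) (by omega) le_rfl)
    (hm _ _ (by omega) le_rfl (by omega) le_rfl)
  simp only [Hdx, GxV_add_jumpV, e1, mul_sub, Finset.sum_sub_distrib]
  linear_combination hrbar / 6 + Δt / Δx * (hleft + hright)

open Function in
lemma Hdy_eq_Hdx_swap (D21m D21p D22m D22p : ℕ → ℕ → Fin 2 → ℝ)
    (Φ c00 c10 c01 c11 : ℕ → ℕ → ℝ) (αt Δx Δy Δt : ℝ) (i j : ℕ) :
    Hdy D21m D21p D22m D22p Φ c00 c10 c01 c11 αt Δx Δy Δt i j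
      = Hdx (swap D22m) (swap D22p) (swap D21m) (swap D21p) (swap Φ) (swap c00) (swap c01)
          (swap c10) (swap c11) αt Δy Δx Δt j i := by
  simp only [Hdy, Hdx, GyH, GxV, rbar, cymH, cypH, cxmH, cxpH, cxmV, cxpV, cymV, cypV, jumpH,
    jumpV, cmH, cpH, cmV, cpV, swap, Fin.sum_univ_two]
  ring

theorem Hdy_nonneg {D21m D21p D22m D22p : ℕ → ℕ → Fin 2 → ℝ} {Φ c00 c10 c01 c11 : ℕ → ℕ → ℝ}
    {αt Δx Δy Δt D E : ℝ} {i j : ℕ} (hj : 2 ≤ j)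
    (hΔx : 0 < Δx) (hΔy : 0 < Δy) (hΔt : 0 ≤ Δt)
    (hD22 : ∀ e, j - 1 ≤ e → e ≤ j → ∀ β,
      (0 ≤ D22m i e β ∧ D22m i e β ≤ D) ∧ (0 ≤ D22p i e β ∧ D22p i e β ≤ D))
    (hD21 : ∀ e, j - 1 ≤ e → e ≤ j → ∀ β, |D21m i e β| ≤ E ∧ |D21p i e β| ≤ E)
    (hαt : Δx / (2 * Δy) * D + Real.sqrt 3 * E ≤ αt)
    (hCFL : ∀ a b, i - 1 ≤ a → a ≤ i → j - 1 ≤ b → b ≤ j →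
      D * (Δt / Δy ^ 2) + 2 * (αt + E) * (Δt / (Δx * Δy)) < Φ a b / 12)
    (hc : ∀ b, j - 1 ≤ b → b ≤ j + 1 → CellNonneg c00 c10 c01 c11 i b) :
    0 ≤ Hdy D21m D21p D22m D22p Φ c00 c10 c01 c11 αt Δx Δy Δt i j := by
  rw [Hdy_eq_Hdx_swap]
  exact Hdx_nonneg hj hΔy hΔx hΔt hD22 hD21 hαt
    (fun b a hb₁ hb₂ ha₁ ha₂ => mul_comm Δy Δx ▸ hCFL a b ha₁ ha₂ hb₁ hb₂)
    (fun b hb₁ hb₂ => (hc b hb₁ hb₂).swap)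

lemma source_point_nonneg {r c ct q z P Δt m : ℝ} (hΔt : 0 ≤ Δt) (hz : 0 ≤ z) (hr : 0 ≤ r)
    (hc : 0 ≤ c) (hct : 0 ≤ ct) (hmc : m * c ≤ r) (hP : 6 * Δt * z * max P 0 ≤ 1)
    (hq : q < 0 → ct = c ∧ 6 * Δt * (-q) < m) :
    0 ≤ r / 3 + Δt * (ct * q - z * r * P) := by
  have hsink : Δt * (z * r * P) ≤ r / 6 := by
    have : Δt * z * P ≤ Δt * z * max P 0 := by gcongr; exact le_max_left _ _
    nlinarith
  have hinjection : -(Δt * (ct * q)) ≤ r / 6 := by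
    rcases lt_or_ge q 0 with hq0 | hq0
    · obtain ⟨rfl, hm⟩ := hq hq0
      nlinarith
    · nlinarith [mul_nonneg hct hq0]
  linarith

lemma rbar_eq_sum_rGP (Φ c00 c10 c01 c11 : ℕ → ℕ → ℝ) (i j : ℕ) :
    rbar Φ c00 c10 c01 c11 i j = ∑ β, ∑ γ, 1 / 2 * (1 / 2) * rGP Φ c00 c10 c01 c11 i j β γ := by
  simp only [rbar, rGP, Fin.sum_univ_two, ga_zero, ga_one, mu1, mu2]
  ring

lemma Hs_eq_sum (Φ c00 c10 c01 c11 : ℕ → ℕ → ℝ) (q ct P : ℕ → ℕ → Fin 2 → Fin 2 → ℝ)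
    (z Δt : ℝ) (i j : ℕ) :
    Hs Φ c00 c10 c01 c11 q ct P z Δt i j
      = ∑ β, ∑ γ, 1 / 2 * (1 / 2) * (rGP Φ c00 c10 c01 c11 i j β γ / 3
          + Δt * (ct i j β γ * q i j β γ - z * rGP Φ c00 c10 c01 c11 i j β γ * P i j β γ)) := by
  simp only [Hs, rbar_eq_sum_rGP, Fin.sum_univ_two]
  ring

theorem Hs_nonneg {Φ c00 c10 c01 c11 : ℕ → ℕ → ℝ} {q ct P : ℕ → ℕ → Fin 2 → Fin 2 → ℝ}
    {z Δt : ℝ} {i j : ℕ} (hΔt : 0 ≤ Δt) (hz : 0 ≤ z)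
    (hΦ : ∀ a b, i - 1 ≤ a → a ≤ i → j - 1 ≤ b → b ≤ j → 0 ≤ Φ a b)
    (hc : CellNonneg c00 c10 c01 c11 i j)
    (hP : ∀ β γ, 6 * Δt * z * max (P i j β γ) 0 ≤ 1) (hct : ∀ β γ, 0 ≤ ct i j β γ)
    (hq : ∀ β γ, q i j β γ < 0 →
      ct i j β γ = cGP c00 c10 c01 c11 i j β γ ∧
      6 * Δt * (-q i j β γ)
        < min (min (Φ (i - 1) (j - 1)) (Φ i (j - 1))) (min (Φ (i - 1) j) (Φ i j))) :
    0 ≤ Hs Φ c00 c10 c01 c11 q ct P z Δt i j := by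
  have hr β γ : 0 ≤ rGP Φ c00 c10 c01 c11 i j β γ := by
    simpa using mul_cGP_le_rGP hc (hΦ _ _ le_rfl (by omega) le_rfl (by omega))
      (hΦ _ _ (by omega) le_rfl le_rfl (by omega)) (hΦ _ _ le_rfl (by omega) (by omega) le_rfl)
      (hΦ _ _ (by omega) le_rfl (by omega) le_rfl) β γ
  rw [Hs_eq_sum]
  refine Finset.sum_nonneg fun β _ => Finset.sum_nonneg fun γ _ => mul_nonneg (by norm_num) ?_
  exact source_point_nonneg hΔt hz (hr β γ) (cGP_nonneg hc β γ) (hct β γ)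
    (mul_cGP_le_rGP hc (by simp) (by simp) (by simp) (by simp) β γ) (hP β γ) (hq β γ)

lemma mul_le_div_six_of_le_div {s g Φ : ℝ} (hg : 0 < g) (h : s ≤ Φ / (6 * g)) :
    s * g ≤ Φ / 6 := by
  rw [le_div_iff₀ (by positivity)] at h
  linarith

theorem rbarnew_nonneg {Nx Ny : ℕ} {Δx Δy Δt : ℝ} (hΔx : 0 < Δx) (hΔy : 0 < Δy) (hΔt : 0 ≤ Δt)
    {Φ c00 c10 c01 c11 : ℕ → ℕ → ℝ}
    {u1 u2 D11m D11p D12m D12p D21m D21p D22m D22p : ℕ → ℕ → Fin 2 → ℝ}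
    {q ct P : ℕ → ℕ → Fin 2 → Fin 2 → ℝ} {α αt z D11M D12M D22M D21M : ℝ}
    (hΦ : ∀ i j, i ≤ Nx → j ≤ Ny → 0 ≤ Φ i j)
    (hc : ∀ i j, 1 ≤ i → i ≤ Nx → 1 ≤ j → j ≤ Ny → CellNonneg c00 c10 c01 c11 i j)
    (hα0 : 0 < α)
    (hα1 : ∀ i j, 1 ≤ i → i ≤ Nx - 1 → 1 ≤ j → j ≤ Ny → ∀ β : Fin 2, u1 i j β < α)
    (hα2 : ∀ i j, 1 ≤ i → i ≤ Nx → 1 ≤ j → j ≤ Ny - 1 → ∀ β : Fin 2, u2 i j β < α)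
    (hCFL0 : ∀ i j, i ≤ Nx → j ≤ Ny → Δt / Δx + Δt / Δy ≤ Φ i j / (6 * α))
    (hCFL1 : ∀ i j, 1 ≤ i → i ≤ Nx - 1 → 1 ≤ j → j ≤ Ny → ∀ β : Fin 2,
      Δt / Δx + Δt / Δy ≤ Φ i (j - 1) / (6 * (α - u1 i j β)) ∧
      Δt / Δx + Δt / Δy ≤ Φ i j / (6 * (α - u1 i j β)))
    (hCFL2 : ∀ i j, 1 ≤ i → i ≤ Nx → 1 ≤ j → j ≤ Ny - 1 → ∀ β : Fin 2,
      Δt / Δx + Δt / Δy ≤ Φ (i - 1) j / (6 * (α - u2 i j β)) ∧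
      Δt / Δx + Δt / Δy ≤ Φ i j / (6 * (α - u2 i j β)))
    (hD11 : ∀ i j, 1 ≤ i → i ≤ Nx - 1 → 1 ≤ j → j ≤ Ny → ∀ β : Fin 2,
      (0 ≤ D11m i j β ∧ D11m i j β ≤ D11M) ∧ (0 ≤ D11p i j β ∧ D11p i j β ≤ D11M))
    (hD12 : ∀ i j, 1 ≤ i → i ≤ Nx - 1 → 1 ≤ j → j ≤ Ny → ∀ β : Fin 2,
      |D12m i j β| ≤ D12M ∧ |D12p i j β| ≤ D12M)
    (hD22 : ∀ i j, 1 ≤ i → i ≤ Nx → 1 ≤ j → j ≤ Ny - 1 → ∀ β : Fin 2,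
      (0 ≤ D22m i j β ∧ D22m i j β ≤ D22M) ∧ (0 ≤ D22p i j β ∧ D22p i j β ≤ D22M))
    (hD21 : ∀ i j, 1 ≤ i → i ≤ Nx → 1 ≤ j → j ≤ Ny - 1 → ∀ β : Fin 2,
      |D21m i j β| ≤ D21M ∧ |D21p i j β| ≤ D21M)
    (hαt1 : (Δy / (2 * Δx)) * D11M + Real.sqrt 3 * D12M ≤ αt)
    (hαt2 : (Δx / (2 * Δy)) * D22M + Real.sqrt 3 * D21M ≤ αt)
    (hCFL3 : ∀ i j, i ≤ Nx → j ≤ Ny →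
      D11M * (Δt / Δx ^ 2) + 2 * (αt + D12M) * (Δt / (Δx * Δy)) < Φ i j / 12)
    (hCFL4 : ∀ i j, i ≤ Nx → j ≤ Ny →
      D22M * (Δt / Δy ^ 2) + 2 * (αt + D21M) * (Δt / (Δx * Δy)) < Φ i j / 12)
    (hz : 0 ≤ z)
    (hP : ∀ i j, 1 ≤ i → i ≤ Nx → 1 ≤ j → j ≤ Ny → ∀ β γ : Fin 2,
      6 * Δt * z * max (P i j β γ) 0 ≤ 1)
    (hct : ∀ i j, 1 ≤ i → i ≤ Nx → 1 ≤ j → j ≤ Ny → ∀ β γ : Fin 2, 0 ≤ ct i j β γ)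
    (hq : ∀ i j, 1 ≤ i → i ≤ Nx → 1 ≤ j → j ≤ Ny → ∀ β γ : Fin 2,
      q i j β γ < 0 →
        ct i j β γ = cGP c00 c10 c01 c11 i j β γ ∧
        6 * Δt * (-q i j β γ)
          < min (min (Φ (i - 1) (j - 1)) (Φ i (j - 1))) (min (Φ (i - 1) j) (Φ i j)))
    (i j : ℕ) (hi₁ : 2 ≤ i) (hi₂ : i ≤ Nx - 1) (hj₁ : 2 ≤ j) (hj₂ : j ≤ Ny - 1) :
    0 ≤ rbarnew u1 u2 D11m D11p D12m D12p D21m D21p D22m D22p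
      Φ c00 c10 c01 c11 q ct P α αt z Δx Δy Δt i j := by
  have gapL β : 0 < α - u1 (i - 1) j β :=
    sub_pos.mpr (hα1 _ _ (by omega) (by omega) (by omega) (by omega) β)
  have gapB β : 0 < α - u2 i (j - 1) β :=
    sub_pos.mpr (hα2 _ _ (by omega) (by omega) (by omega) (by omega) β)
  rw [rbarnew]
  refine add_nonneg (add_nonneg (add_nonneg ?_ ?_) ?_) ?_
  · exact Hc_nonneg (by omega) (by omega) hΔx hΔy hΔt hα0.le
      (hc i j (by omega) (by omega) (by omega) (by omega))
      (hc (i - 1) j (by omega) (by omega) (by omega) (by omega))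
      (hc (i + 1) j (by omega) (by omega) (by omega) (by omega))
      (hc i (j - 1) (by omega) (by omega) (by omega) (by omega))
      (hc i (j + 1) (by omega) (by omega) (by omega) (by omega))
      (fun β => (hα1 i j (by omega) (by omega) (by omega) (by omega) β).le)
      (fun β => (hα2 i j (by omega) (by omega) (by omega) (by omega) β).le)
      (fun β => have h := hCFL1 (i - 1) j (by omega) (by omega) (by omega) (by omega) β
        ⟨mul_le_div_six_of_le_div (gapL β) h.1, mul_le_div_six_of_le_div (gapL β) h.2⟩)
      (fun β => have h := hCFL2 i (j - 1) (by omega) (by omega) (by omega) (by omega) β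
        ⟨mul_le_div_six_of_le_div (gapB β) h.1, mul_le_div_six_of_le_div (gapB β) h.2⟩)
      (fun a b _ h₁ _ h₂ => mul_le_div_six_of_le_div hα0 (hCFL0 a b (by omega) (by omega)))
  · exact Hdx_nonneg hi₁ hΔx hΔy hΔt
      (fun e h₁ h₂ => hD11 e j (by omega) (by omega) (by omega) (by omega))
      (fun e h₁ h₂ => hD12 e j (by omega) (by omega) (by omega) (by omega)) hαt1
      (fun a b h₁ h₂ _ h₃ => hCFL3 a b (by omega) (by omega))
      (fun a h₁ h₂ => hc a j (by omega) (by omega) (by omega) (by omega))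
  · exact Hdy_nonneg hj₁ hΔx hΔy hΔt
      (fun e h₁ h₂ => hD22 i e (by omega) (by omega) (by omega) (by omega))
      (fun e h₁ h₂ => hD21 i e (by omega) (by omega) (by omega) (by omega)) hαt2
      (fun a b _ h₁ _ h₂ => hCFL4 a b (by omega) (by omega))
      (fun b h₁ h₂ => hc i b (by omega) (by omega) (by omega) (by omega))
  · exact Hs_nonneg hΔt hz (fun a b _ h₁ _ h₂ => hΦ a b (by omega) (by omega))
      (hc i j (by omega) (by omega) (by omega) (by omega))
      (hP i j (by omega) (by omega) (by omega) (by omega))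
      (hct i j (by omega) (by omega) (by omega) (by omega))
      (hq i j (by omega) (by omega) (by omega) (by omega))

lemma cGP_one_sub (c00 c10 c01 c11 : ℕ → ℕ → ℝ) (i j : ℕ) (β γ : Fin 2) :
    cGP (1 - c00) (1 - c10) (1 - c01) (1 - c11) i j β γ = 1 - cGP c00 c10 c01 c11 i j β γ := by
  simp only [cGP, Pi.sub_apply, Pi.one_apply, ga_one_sub]

lemma Hc_add_Hc_one_sub (u1 u2 : ℕ → ℕ → Fin 2 → ℝ) (Φ c00 c10 c01 c11 : ℕ → ℕ → ℝ)
    (α Δx Δy Δt : ℝ) (i j : ℕ) :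
    Hc u1 u2 Φ c00 c10 c01 c11 α Δx Δy Δt i j
      + Hc u1 u2 Φ (1 - c00) (1 - c10) (1 - c01) (1 - c11) α Δx Δy Δt i j
      = rbar Φ 1 1 1 1 i j / 3 + Δt / Δx * ∑ β, 1 / 2 * (u1 (i - 1) j β - u1 i j β)
        + Δt / Δy * ∑ β, 1 / 2 * (u2 i (j - 1) β - u2 i j β) := by
  simp only [Hc, rbar, uc1, uc2, cpV, cmV, cpH, cmH, Pi.sub_apply, Pi.one_apply,
    Fin.sum_univ_two, ga_zero, ga_one, mu1, mu2]
  ring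

lemma Hdx_add_Hdx_one_sub (D11m D11p D12m D12p : ℕ → ℕ → Fin 2 → ℝ)
    (Φ c00 c10 c01 c11 : ℕ → ℕ → ℝ) (αt Δx Δy Δt : ℝ) (i j : ℕ) :
    Hdx D11m D11p D12m D12p Φ c00 c10 c01 c11 αt Δx Δy Δt i j
      + Hdx D11m D11p D12m D12p Φ (1 - c00) (1 - c10) (1 - c01) (1 - c11) αt Δx Δy Δt i j
      = rbar Φ 1 1 1 1 i j / 6 := by
  simp only [Hdx, GxV, rbar, cxmV, cxpV, cymV, cypV, jumpV, cmV, cpV, Pi.sub_apply, Pi.one_apply,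
    Fin.sum_univ_two, ga_zero, ga_one, mu1, mu2]
  ring

lemma Hdy_add_Hdy_one_sub (D21m D21p D22m D22p : ℕ → ℕ → Fin 2 → ℝ)
    (Φ c00 c10 c01 c11 : ℕ → ℕ → ℝ) (αt Δx Δy Δt : ℝ) (i j : ℕ) :
    Hdy D21m D21p D22m D22p Φ c00 c10 c01 c11 αt Δx Δy Δt i j
      + Hdy D21m D21p D22m D22p Φ (1 - c00) (1 - c10) (1 - c01) (1 - c11) αt Δx Δy Δt i j
      = rbar Φ 1 1 1 1 i j / 6 := by
  simp only [Hdy, GyH, rbar, cxmH, cxpH, cymH, cypH, jumpH, cmH, cpH, Pi.sub_apply, Pi.one_apply,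
    Fin.sum_univ_two, ga_zero, ga_one, mu1, mu2]
  ring

lemma Hs_add_Hs_one_sub (Φ c00 c10 c01 c11 : ℕ → ℕ → ℝ) (q ct P : ℕ → ℕ → Fin 2 → Fin 2 → ℝ)
    (z1 z2 Δt : ℝ) (i j : ℕ) :
    Hs Φ c00 c10 c01 c11 q ct P z1 Δt i j
      + Hs Φ (1 - c00) (1 - c10) (1 - c01) (1 - c11) q (1 - ct) P z2 Δt i j
      = rbar Φ 1 1 1 1 i j / 3 + Δt * ∑ β, ∑ γ, 1 / 2 * (1 / 2) * (q i j β γ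
          - (z1 * rGP Φ c00 c10 c01 c11 i j β γ
            + z2 * (phiGP Φ i j β γ - rGP Φ c00 c10 c01 c11 i j β γ)) * P i j β γ) := by
  simp only [Hs, rGP, phiGP, rbar, Pi.sub_apply, Pi.one_apply, Fin.sum_univ_two, ga_zero, ga_one,
    mu1, mu2]
  ring

theorem rbarnew_add_rbarnew_one_sub
    (u1 u2 D11m D11p D12m D12p D21m D21p D22m D22p : ℕ → ℕ → Fin 2 → ℝ)
    (Φ c00 c10 c01 c11 : ℕ → ℕ → ℝ) (q ct P : ℕ → ℕ → Fin 2 → Fin 2 → ℝ)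
    (α αt z1 z2 Δx Δy Δt : ℝ) (i j : ℕ) (hΔx : Δx ≠ 0) (hΔy : Δy ≠ 0)
    (hpress : Δx * Δy * ∑ β : Fin 2, ∑ γ : Fin 2, (1 / 2 : ℝ) * (1 / 2 : ℝ) *
          ((z1 * rGP Φ c00 c10 c01 c11 i j β γ
            + z2 * (phiGP Φ i j β γ - rGP Φ c00 c10 c01 c11 i j β γ)) * P i j β γ)
        = Δy * ∑ β : Fin 2, (1 / 2 : ℝ) * (u1 (i - 1) j β - u1 i j β)
          + Δx * ∑ β : Fin 2, (1 / 2 : ℝ) * (u2 i (j - 1) β - u2 i j β)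
          + Δx * Δy * ∑ β : Fin 2, ∑ γ : Fin 2, (1 / 2 : ℝ) * (1 / 2 : ℝ) * q i j β γ) :
    rbarnew u1 u2 D11m D11p D12m D12p D21m D21p D22m D22p Φ c00 c10 c01 c11 q ct P α αt z1
        Δx Δy Δt i j
      + rbarnew u1 u2 D11m D11p D12m D12p D21m D21p D22m D22p Φ (1 - c00) (1 - c10) (1 - c01)
        (1 - c11) q (1 - ct) P α αt z2 Δx Δy Δt i j
      = (Φ (i - 1) (j - 1) + Φ i (j - 1) + Φ (i - 1) j + Φ i j) / 4 := by
  have hc := Hc_add_Hc_one_sub u1 u2 Φ c00 c10 c01 c11 α Δx Δy Δt i j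
  have hx := Hdx_add_Hdx_one_sub D11m D11p D12m D12p Φ c00 c10 c01 c11 αt Δx Δy Δt i j
  have hy := Hdy_add_Hdy_one_sub D21m D21p D22m D22p Φ c00 c10 c01 c11 αt Δx Δy Δt i j
  have hs := Hs_add_Hs_one_sub Φ c00 c10 c01 c11 q ct P z1 z2 Δt i j
  simp only [rbar, Pi.one_apply, one_mul, Fin.sum_univ_two] at hc hx hy hs hpress
  rw [rbarnew, rbarnew]
  linear_combination (norm := skip) hc + hx + hy + hs - Δt / (Δx * Δy) * hpress
  field_simp
  ring

theorem bound_preserving_cell_averages_2d_general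
    (Nx Ny : ℕ) (Δx Δy Δt : ℝ)
    (hΔx : 0 < Δx) (hΔy : 0 < Δy) (hΔt : 0 < Δt)
    (Φ c00 c10 c01 c11 : ℕ → ℕ → ℝ)
    (u1 u2 D11m D11p D12m D12p D21m D21p D22m D22p : ℕ → ℕ → Fin 2 → ℝ)
    (q ct P : ℕ → ℕ → Fin 2 → Fin 2 → ℝ) (α αt z1 z2 D11M D12M D22M D21M : ℝ)
    (hΦ : ∀ i j, i ≤ Nx → j ≤ Ny → 0 < Φ i j)
    -- all corner concentration values lie in [0,1]
    (hc : ∀ i j, 1 ≤ i → i ≤ Nx → 1 ≤ j → j ≤ Ny →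
      (0 ≤ c00 i j ∧ c00 i j ≤ 1) ∧ (0 ≤ c10 i j ∧ c10 i j ≤ 1) ∧
      (0 ≤ c01 i j ∧ c01 i j ≤ 1) ∧ (0 ≤ c11 i j ∧ c11 i j ≤ 1))
    -- (ii) convection conditions
    (hα0 : 0 < α)
    (hα1 : ∀ i j, 1 ≤ i → i ≤ Nx - 1 → 1 ≤ j → j ≤ Ny → ∀ β : Fin 2, u1 i j β < α)
    (hα2 : ∀ i j, 1 ≤ i → i ≤ Nx → 1 ≤ j → j ≤ Ny - 1 → ∀ β : Fin 2, u2 i j β < α)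
    (hCFL0 : ∀ i j, i ≤ Nx → j ≤ Ny → Δt / Δx + Δt / Δy ≤ Φ i j / (6 * α))
    (hCFL1 : ∀ i j, 1 ≤ i → i ≤ Nx - 1 → 1 ≤ j → j ≤ Ny → ∀ β : Fin 2,
      Δt / Δx + Δt / Δy ≤ Φ i (j - 1) / (6 * (α - u1 i j β)) ∧
      Δt / Δx + Δt / Δy ≤ Φ i j / (6 * (α - u1 i j β)))
    (hCFL2 : ∀ i j, 1 ≤ i → i ≤ Nx → 1 ≤ j → j ≤ Ny - 1 → ∀ β : Fin 2,
      Δt / Δx + Δt / Δy ≤ Φ (i - 1) j / (6 * (α - u2 i j β)) ∧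
      Δt / Δx + Δt / Δy ≤ Φ i j / (6 * (α - u2 i j β)))
    -- (iii) diffusion conditions
    (hD11 : ∀ i j, 1 ≤ i → i ≤ Nx - 1 → 1 ≤ j → j ≤ Ny → ∀ β : Fin 2,
      (0 ≤ D11m i j β ∧ D11m i j β ≤ D11M) ∧ (0 ≤ D11p i j β ∧ D11p i j β ≤ D11M))
    (hD12 : ∀ i j, 1 ≤ i → i ≤ Nx - 1 → 1 ≤ j → j ≤ Ny → ∀ β : Fin 2,
      |D12m i j β| ≤ D12M ∧ |D12p i j β| ≤ D12M)
    (hD22 : ∀ i j, 1 ≤ i → i ≤ Nx → 1 ≤ j → j ≤ Ny - 1 → ∀ β : Fin 2,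
      (0 ≤ D22m i j β ∧ D22m i j β ≤ D22M) ∧ (0 ≤ D22p i j β ∧ D22p i j β ≤ D22M))
    (hD21 : ∀ i j, 1 ≤ i → i ≤ Nx → 1 ≤ j → j ≤ Ny - 1 → ∀ β : Fin 2,
      |D21m i j β| ≤ D21M ∧ |D21p i j β| ≤ D21M)
    (hαt1 : (Δy / (2 * Δx)) * D11M + Real.sqrt 3 * D12M ≤ αt)
    (hαt2 : (Δx / (2 * Δy)) * D22M + Real.sqrt 3 * D21M ≤ αt)
    (hCFL3 : ∀ i j, i ≤ Nx → j ≤ Ny →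
      D11M * (Δt / Δx ^ 2) + 2 * (αt + D12M) * (Δt / (Δx * Δy)) < Φ i j / 12)
    (hCFL4 : ∀ i j, i ≤ Nx → j ≤ Ny →
      D22M * (Δt / Δy ^ 2) + 2 * (αt + D21M) * (Δt / (Δx * Δy)) < Φ i j / 12)
    -- (iv) source conditions, for z₁ and z₂
    (hz1 : 0 ≤ z1) (hz2 : 0 ≤ z2)
    (hP1 : ∀ i j, 1 ≤ i → i ≤ Nx → 1 ≤ j → j ≤ Ny → ∀ β γ : Fin 2,
      6 * Δt * z1 * max (P i j β γ) 0 ≤ 1)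
    (hP2 : ∀ i j, 1 ≤ i → i ≤ Nx → 1 ≤ j → j ≤ Ny → ∀ β γ : Fin 2,
      6 * Δt * z2 * max (P i j β γ) 0 ≤ 1)
    (hct : ∀ i j, 1 ≤ i → i ≤ Nx → 1 ≤ j → j ≤ Ny → ∀ β γ : Fin 2,
      0 ≤ ct i j β γ ∧ ct i j β γ ≤ 1)
    (hq2 : ∀ i j, 1 ≤ i → i ≤ Nx → 1 ≤ j → j ≤ Ny → ∀ β γ : Fin 2,
      q i j β γ < 0 →
        ct i j β γ = cGP c00 c10 c01 c11 i j β γ ∧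
        6 * Δt * (-q i j β γ)
          < min (min (Φ (i - 1) (j - 1)) (Φ i (j - 1))) (min (Φ (i - 1) j) (Φ i j)))
    -- discrete pressure relation on interior cells
    (hpress : ∀ i j, 2 ≤ i → i ≤ Nx - 1 → 2 ≤ j → j ≤ Ny - 1 →
      Δx * Δy * ∑ β : Fin 2, ∑ γ : Fin 2, (1 / 2 : ℝ) * (1 / 2 : ℝ) *
          ((z1 * rGP Φ c00 c10 c01 c11 i j β γ
            + z2 * (phiGP Φ i j β γ - rGP Φ c00 c10 c01 c11 i j β γ)) * P i j β γ)
        = Δy * ∑ β : Fin 2, (1 / 2 : ℝ) * (u1 (i - 1) j β - u1 i j β)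
          + Δx * ∑ β : Fin 2, (1 / 2 : ℝ) * (u2 i (j - 1) β - u2 i j β)
          + Δx * Δy * ∑ β : Fin 2, ∑ γ : Fin 2, (1 / 2 : ℝ) * (1 / 2 : ℝ) * q i j β γ) :
    ∀ i j, 2 ≤ i → i ≤ Nx - 1 → 2 ≤ j → j ≤ Ny - 1 →
      0 ≤ rbarnew u1 u2 D11m D11p D12m D12p D21m D21p D22m D22p
            Φ c00 c10 c01 c11 q ct P α αt z1 Δx Δy Δt i j ∧
      rbarnew u1 u2 D11m D11p D12m D12p D21m D21p D22m D22p
            Φ c00 c10 c01 c11 q ct P α αt z1 Δx Δy Δt i j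
        ≤ (Φ (i - 1) (j - 1) + Φ i (j - 1) + Φ (i - 1) j + Φ i j) / 4 := by
  intro i j hi₁ hi₂ hj₁ hj₂
  have hcell a b h₁ h₂ h₃ h₄ := cellNonneg_and_one_sub (hc a b h₁ h₂ h₃ h₄)
  have hΦ' a b (h₁ : a ≤ Nx) (h₂ : b ≤ Ny) := (hΦ a b h₁ h₂).le
  have hlower := rbarnew_nonneg hΔx hΔy hΔt.le hΦ'
    (fun a b h₁ h₂ h₃ h₄ => (hcell a b h₁ h₂ h₃ h₄).1)
    hα0 hα1 hα2 hCFL0 hCFL1 hCFL2 hD11 hD12 hD22 hD21 hαt1 hαt2 hCFL3 hCFL4 hz1 hP1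
    (fun a b h₁ h₂ h₃ h₄ β γ => (hct a b h₁ h₂ h₃ h₄ β γ).1) hq2 i j hi₁ hi₂ hj₁ hj₂
  have hupper := rbarnew_nonneg (ct := 1 - ct) hΔx hΔy hΔt.le hΦ'
    (fun a b h₁ h₂ h₃ h₄ => (hcell a b h₁ h₂ h₃ h₄).2)
    hα0 hα1 hα2 hCFL0 hCFL1 hCFL2 hD11 hD12 hD22 hD21 hαt1 hαt2 hCFL3 hCFL4 hz2 hP2
    (fun a b h₁ h₂ h₃ h₄ β γ => sub_nonneg.mpr (hct a b h₁ h₂ h₃ h₄ β γ).2)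
    (fun a b h₁ h₂ h₃ h₄ β γ hneg => (hq2 a b h₁ h₂ h₃ h₄ β γ hneg).imp_left
      fun h => by rw [cGP_one_sub, ← h]; rfl)
    i j hi₁ hi₂ hj₁ hj₂
  have hsum := rbarnew_add_rbarnew_one_sub u1 u2 D11m D11p D12m D12p D21m D21p D22m D22p
    Φ c00 c10 c01 c11 q ct P α αt z1 z2 Δx Δy Δt i j hΔx.ne' hΔy.ne' (hpress i j hi₁ hi₂ hj₁ hj₂)
  exact ⟨hlower, by linarith⟩

/-- Theorem 3.4 (2D): with `0 ≤ r ≤ Φ` at every corner, `0 ≤ c̃ ≤ 1`, the positivity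
conditions (ii)-(iv) (also for `z₂`) and the discrete pressure relation, the
Euler-forward cell-average update satisfies `0 ≤ r̄^{new}_{ij} ≤ Φ̄_{ij}` for every
interior cell. -/
theorem bound_preserving_cell_averages_2d
    (Nx Ny : ℕ) (hNx : 4 ≤ Nx) (hNy : 4 ≤ Ny) (Δx Δy Δt : ℝ)
    (hΔx : 0 < Δx) (hΔy : 0 < Δy) (hΔt : 0 < Δt)
    (Φ c00 c10 c01 c11 : ℕ → ℕ → ℝ)
    (u1 u2 D11m D11p D12m D12p D21m D21p D22m D22p : ℕ → ℕ → Fin 2 → ℝ)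
    (q ct P : ℕ → ℕ → Fin 2 → Fin 2 → ℝ) (α αt z1 z2 D11M D12M D22M D21M : ℝ)
    (hΦ : ∀ i j, i ≤ Nx → j ≤ Ny → 0 < Φ i j)
    -- all corner concentration values lie in [0,1]
    (hc : ∀ i j, 1 ≤ i → i ≤ Nx → 1 ≤ j → j ≤ Ny →
      (0 ≤ c00 i j ∧ c00 i j ≤ 1) ∧ (0 ≤ c10 i j ∧ c10 i j ≤ 1) ∧
      (0 ≤ c01 i j ∧ c01 i j ≤ 1) ∧ (0 ≤ c11 i j ∧ c11 i j ≤ 1))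
    -- (ii) convection conditions
    (hα0 : 0 < α)
    (hα1 : ∀ i j, 1 ≤ i → i ≤ Nx - 1 → 1 ≤ j → j ≤ Ny → ∀ β : Fin 2, u1 i j β < α)
    (hα2 : ∀ i j, 1 ≤ i → i ≤ Nx → 1 ≤ j → j ≤ Ny - 1 → ∀ β : Fin 2, u2 i j β < α)
    (hCFL0 : ∀ i j, i ≤ Nx → j ≤ Ny → Δt / Δx + Δt / Δy ≤ Φ i j / (6 * α))
    (hCFL1 : ∀ i j, 1 ≤ i → i ≤ Nx - 1 → 1 ≤ j → j ≤ Ny → ∀ β : Fin 2,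
      Δt / Δx + Δt / Δy ≤ Φ i (j - 1) / (6 * (α - u1 i j β)) ∧
      Δt / Δx + Δt / Δy ≤ Φ i j / (6 * (α - u1 i j β)))
    (hCFL2 : ∀ i j, 1 ≤ i → i ≤ Nx → 1 ≤ j → j ≤ Ny - 1 → ∀ β : Fin 2,
      Δt / Δx + Δt / Δy ≤ Φ (i - 1) j / (6 * (α - u2 i j β)) ∧
      Δt / Δx + Δt / Δy ≤ Φ i j / (6 * (α - u2 i j β)))
    -- (iii) diffusion conditions
    (hD11 : ∀ i j, 1 ≤ i → i ≤ Nx - 1 → 1 ≤ j → j ≤ Ny → ∀ β : Fin 2,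
      (0 ≤ D11m i j β ∧ D11m i j β ≤ D11M) ∧ (0 ≤ D11p i j β ∧ D11p i j β ≤ D11M))
    (hD12 : ∀ i j, 1 ≤ i → i ≤ Nx - 1 → 1 ≤ j → j ≤ Ny → ∀ β : Fin 2,
      |D12m i j β| ≤ D12M ∧ |D12p i j β| ≤ D12M)
    (hD22 : ∀ i j, 1 ≤ i → i ≤ Nx → 1 ≤ j → j ≤ Ny - 1 → ∀ β : Fin 2,
      (0 ≤ D22m i j β ∧ D22m i j β ≤ D22M) ∧ (0 ≤ D22p i j β ∧ D22p i j β ≤ D22M))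
    (hD21 : ∀ i j, 1 ≤ i → i ≤ Nx → 1 ≤ j → j ≤ Ny - 1 → ∀ β : Fin 2,
      |D21m i j β| ≤ D21M ∧ |D21p i j β| ≤ D21M)
    (hαt0 : 0 < αt)
    (hαt1 : (Δy / (2 * Δx)) * D11M + Real.sqrt 3 * D12M ≤ αt)
    (hαt2 : (Δx / (2 * Δy)) * D22M + Real.sqrt 3 * D21M ≤ αt)
    (hCFL3 : ∀ i j, i ≤ Nx → j ≤ Ny →
      D11M * (Δt / Δx ^ 2) + 2 * (αt + D12M) * (Δt / (Δx * Δy)) < Φ i j / 12)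
    (hCFL4 : ∀ i j, i ≤ Nx → j ≤ Ny →
      D22M * (Δt / Δy ^ 2) + 2 * (αt + D21M) * (Δt / (Δx * Δy)) < Φ i j / 12)
    -- (iv) source conditions, for z₁ and z₂
    (hz1 : 0 ≤ z1) (hz2 : 0 ≤ z2)
    (hP1 : ∀ i j, 1 ≤ i → i ≤ Nx → 1 ≤ j → j ≤ Ny → ∀ β γ : Fin 2,
      6 * Δt * z1 * max (P i j β γ) 0 ≤ 1)
    (hP2 : ∀ i j, 1 ≤ i → i ≤ Nx → 1 ≤ j → j ≤ Ny → ∀ β γ : Fin 2,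
      6 * Δt * z2 * max (P i j β γ) 0 ≤ 1)
    (hct : ∀ i j, 1 ≤ i → i ≤ Nx → 1 ≤ j → j ≤ Ny → ∀ β γ : Fin 2,
      0 ≤ ct i j β γ ∧ ct i j β γ ≤ 1)
    (hq2 : ∀ i j, 1 ≤ i → i ≤ Nx → 1 ≤ j → j ≤ Ny → ∀ β γ : Fin 2,
      q i j β γ < 0 →
        ct i j β γ = cGP c00 c10 c01 c11 i j β γ ∧
        6 * Δt * (-q i j β γ)
          < min (min (Φ (i - 1) (j - 1)) (Φ i (j - 1))) (min (Φ (i - 1) j) (Φ i j)))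
    -- discrete pressure relation on interior cells
    (hpress : ∀ i j, 2 ≤ i → i ≤ Nx - 1 → 2 ≤ j → j ≤ Ny - 1 →
      Δx * Δy * ∑ β : Fin 2, ∑ γ : Fin 2, (1 / 2 : ℝ) * (1 / 2 : ℝ) *
          ((z1 * rGP Φ c00 c10 c01 c11 i j β γ
            + z2 * (phiGP Φ i j β γ - rGP Φ c00 c10 c01 c11 i j β γ)) * P i j β γ)
        = Δy * ∑ β : Fin 2, (1 / 2 : ℝ) * (u1 (i - 1) j β - u1 i j β)
          + Δx * ∑ β : Fin 2, (1 / 2 : ℝ) * (u2 i (j - 1) β - u2 i j β)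
          + Δx * Δy * ∑ β : Fin 2, ∑ γ : Fin 2, (1 / 2 : ℝ) * (1 / 2 : ℝ) * q i j β γ) :
    ∀ i j, 2 ≤ i → i ≤ Nx - 1 → 2 ≤ j → j ≤ Ny - 1 →
      0 ≤ rbarnew u1 u2 D11m D11p D12m D12p D21m D21p D22m D22p
            Φ c00 c10 c01 c11 q ct P α αt z1 Δx Δy Δt i j ∧
      rbarnew u1 u2 D11m D11p D12m D12p D21m D21p D22m D22p
            Φ c00 c10 c01 c11 q ct P α αt z1 Δx Δy Δt i j
        ≤ (Φ (i - 1) (j - 1) + Φ i (j - 1) + Φ (i - 1) j + Φ i j) / 4 :=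
  bound_preserving_cell_averages_2d_general Nx Ny Δx Δy Δt hΔx hΔy hΔt Φ c00 c10 c01 c11 u1 u2 D11m
    D11p D12m D12p D21m D21p D22m D22p q ct P α αt z1 z2 D11M D12M D22M D21M hΦ hc hα0 hα1 hα2 hCFL0
    hCFL1 hCFL2 hD11 hD12 hD22 hD21 hαt1 hαt2 hCFL3 hCFL4 hz1 hz2 hP1 hP2 hct hq2 hpress

end DG2D
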